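/- Let I ⊂ (0,∞) be an open interval and let w : I → ℝ be a differentiable solution of w'(r) = (2w(r)³ + 2w(r) − √3(1 + w(r)²)^{3/2})/r with w(r) < √3 for all r ∈ I. Then there exists a constant C > 0 such that √3 − 2w(r)/(1 + w(r)²)^{1/2} = C²·r² for all r ∈ I. -/

import Mathlib

/-!
Along a solution, `y(r) = √3 − 2w/√(1+w²)` satisfies the Euler equation `y' = 2y/r`: indeed
`d/dw (2w/√(1+w²)) = 2/(1+w²)^{3/2}`, and the `√3 (1+w²)^{3/2}` term of the ODE cancels against
this denominator. Hence `y/r²` has zero derivative and is constant on the interval, and the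
constant is positive because `2w/√(1+w²) < √3` whenever `w < √3`.
-/

open Real

theorem hasDerivAt_div_pow_of_hasDerivAt_eq_mul_div {y : ℝ → ℝ} {r : ℝ} (k : ℕ) (hr : r ≠ 0)
    (hy : HasDerivAt y (k * y r / r) r) : HasDerivAt (fun x => y x / x ^ k) 0 r := by
  refine (hy.div (hasDerivAt_pow k r) (pow_ne_zero k hr)).congr_deriv ?_
  rcases k with _ | k
  · simp
  · simp only [Nat.add_sub_cancel]
    field_simp
    push_cast
    ring

theorem exists_eq_const_mul_pow_of_hasDerivAt {y : ℝ → ℝ} {s : Set ℝ} (k : ℕ) (hs : IsOpen s)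
    (hs' : IsPreconnected s) (hs0 : ∀ r ∈ s, r ≠ 0)
    (hy : ∀ r ∈ s, HasDerivAt y (k * y r / r) r) : ∃ c, ∀ r ∈ s, y r = c * r ^ k := by
  have hderiv r (hr : r ∈ s) := hasDerivAt_div_pow_of_hasDerivAt_eq_mul_div k (hs0 r hr) (hy r hr)
  obtain ⟨c, hc⟩ := hs.exists_is_const_of_deriv_eq_zero hs'
    (fun r hr => (hderiv r hr).differentiableAt.differentiableWithinAt)
    (fun r hr => (hderiv r hr).deriv)
  refine ⟨c, fun r hr => ?_⟩
  rw [← hc r hr, div_mul_cancel₀ _ (pow_ne_zero k (hs0 r hr))]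

noncomputable def radialFirstIntegral (w : ℝ) : ℝ := √3 - 2 * w / √(1 + w ^ 2)

theorem hasDerivAt_radialFirstIntegral (w : ℝ) :
    HasDerivAt radialFirstIntegral (-2 / √(1 + w ^ 2) ^ 3) w := by
  have hpos : 0 < 1 + w ^ 2 := by positivity
  have hsqrt : HasDerivAt (fun v => √(1 + v ^ 2)) (w / √(1 + w ^ 2)) w := by
    convert ((hasDerivAt_pow 2 w).const_add 1).sqrt hpos.ne' using 1
    field_simp
    ring
  have := (((hasDerivAt_id' w).const_mul 2).fun_div hsqrt (sqrt_pos.2 hpos).ne').const_sub √3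
  refine this.congr_deriv ?_
  have hs2 : √(1 + w ^ 2) ^ 2 = 1 + w ^ 2 := sq_sqrt hpos.le
  field_simp
  linear_combination -hs2

theorem HasDerivAt.radialFirstIntegral_comp {w : ℝ → ℝ} {r : ℝ} (hr : r ≠ 0)
    (hw : HasDerivAt w ((2 * w r ^ 3 + 2 * w r - √3 * √(1 + w r ^ 2) ^ 3) / r) r) :
    HasDerivAt (fun r => radialFirstIntegral (w r)) (2 * radialFirstIntegral (w r) / r) r := by
  refine ((hasDerivAt_radialFirstIntegral (w r)).comp r hw).congr_deriv ?_
  have hs2 : √(1 + w r ^ 2) ^ 2 = 1 + w r ^ 2 := sq_sqrt (by positivity)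
  unfold radialFirstIntegral
  field_simp
  linear_combination (2 * w r) * hs2

theorem radialFirstIntegral_pos {w : ℝ} (hw : w < √3) : 0 < radialFirstIntegral w := by
  have hs : 0 < √(1 + w ^ 2) := sqrt_pos.2 (by positivity)
  rw [radialFirstIntegral, sub_pos, div_lt_iff₀ hs]
  rcases le_or_gt w 0 with hw0 | hw0
  · have : 0 < √3 * √(1 + w ^ 2) := by positivity
    linarith
  · rw [← sqrt_sq (by positivity : 0 ≤ 2 * w), ← sqrt_mul (by norm_num)]
    apply sqrt_lt_sqrt (by positivity)
    have := sq_sqrt (show (0:ℝ) ≤ 3 by norm_num)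
    nlinarith

theorem stmt_7 (a b : ℝ) (I : Set ℝ) (hI : I = Set.Ioo a b) (hIpos : I ⊆ Set.Ioi 0)
    (w : ℝ → ℝ)
    (hw : ∀ r ∈ I, HasDerivAt w
      ((2 * (w r) ^ 3 + 2 * w r - Real.sqrt 3 * (Real.sqrt (1 + (w r) ^ 2)) ^ 3) / r) r)
    (hlt : ∀ r ∈ I, w r < Real.sqrt 3) :
    ∃ C : ℝ, 0 < C ∧ ∀ r ∈ I,
      Real.sqrt 3 - 2 * w r / Real.sqrt (1 + (w r) ^ 2) = C ^ 2 * r ^ 2 := by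
  have hode : ∀ r ∈ I, HasDerivAt (fun r => radialFirstIntegral (w r))
      ((2 : ℕ) * radialFirstIntegral (w r) / r) r := fun r hr => by
    simpa using (hw r hr).radialFirstIntegral_comp (hIpos hr).ne'
  obtain ⟨c, hc⟩ := exists_eq_const_mul_pow_of_hasDerivAt 2 (hI ▸ isOpen_Ioo)
    (hI ▸ isPreconnected_Ioo) (fun r hr => (hIpos hr).ne') hode
  rcases I.eq_empty_or_nonempty with hempty | ⟨r₀, hr₀⟩
  · exact ⟨1, one_pos, by simp [hempty]⟩
  have hc0 : 0 < c := pos_of_mul_pos_left (hc r₀ hr₀ ▸ radialFirstIntegral_pos (hlt r₀ hr₀))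
    (sq_nonneg r₀)
  exact ⟨√c, sqrt_pos.2 hc0, fun r hr => by rw [sq_sqrt hc0.le]; exact hc r hr⟩
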